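/- arXiv:2410.22345 — 16 statements merged into one kernel-verified Lean document; each statement's English description precedes it below -/
import Mathlib

section
/- In a ternary structure (A,p,0,1) satisfying (T1)–(T4), for all a,b,c one has p(c,b,a) = p(a, p(1,b,0), c), i.e. reversing the outer arguments corresponds to complementing the middle argument. -/
theorem stmt_1 {A : Type*} (p : A → A → A → A) (z o : A)
    (T1 : ∀ a, p z a o = a)
    (T2a : ∀ a b, p a z b = a)
    (T2b : ∀ a b, p b o a = a)
    (T3 : ∀ a b, p a b a = a)
    (T4 : ∀ a b₁ b₂ b₃ c, p a (p b₁ b₂ b₃) c = p (p a b₁ c) b₂ (p a b₃ c)) :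
    ∀ a b c : A, p c b a = p a (p o b z) c := by
  intro a b c
  rw [T4, T2b, T2a]
end

section
/- In a ternary structure (A,p,0,1) satisfying (T1)–(T4), the complement distributes over p in two ways: for all a,b,c, p(1,p(a,b,c),0) = p(p(1,a,0), b, p(1,c,0)) and p(1,p(a,b,c),0) = p(p(1,c,0), p(1,b,0), p(1,a,0)). -/
theorem stmt_2 {A : Type*} (p : A → A → A → A) (z o : A)
    (T1 : ∀ a, p z a o = a)
    (T2a : ∀ a b, p a z b = a)
    (T2b : ∀ a b, p b o a = a)
    (T3 : ∀ a b, p a b a = a)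
    (T4 : ∀ a b₁ b₂ b₃ c, p a (p b₁ b₂ b₃) c = p (p a b₁ c) b₂ (p a b₃ c)) :
    ∀ a b c : A, p o (p a b c) z = p (p o a z) b (p o c z) ∧
      p o (p a b c) z = p (p o c z) (p o b z) (p o a z) := by
  intro a b c
  have h1 : p o (p a b c) z = p (p o a z) b (p o c z) := T4 o a b c z
  have h2 : p (p o c z) (p o b z) (p o a z) = p (p o a z) b (p o c z) := by
    rw [T4, T2b, T2a]
  exact ⟨h1, h1.trans h2.symm⟩
end

section
/- In a ternary structure (A,p,0,1) satisfying (T1)–(T4), defining a·b = p(0,a,b), the structure (A,·,1) is a monoid (· is associative with two-sided identity 1), and moreover a·0 = 0 = 0·a for all a. -/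
theorem stmt_3 {A : Type*} (p : A → A → A → A) (z o : A)
    (T1 : ∀ a, p z a o = a)
    (T2a : ∀ a b, p a z b = a)
    (T2b : ∀ a b, p b o a = a)
    (T3 : ∀ a b, p a b a = a)
    (T4 : ∀ a b₁ b₂ b₃ c, p a (p b₁ b₂ b₃) c = p (p a b₁ c) b₂ (p a b₃ c))
    (mul : A → A → A) (hmul : ∀ a b, mul a b = p z a b) :
    (∀ a b c : A, mul (mul a b) c = mul a (mul b c)) ∧
    (∀ a : A, mul a o = a) ∧ (∀ a : A, mul o a = a) ∧
    (∀ a : A, mul a z = z) ∧ (∀ a : A, mul z a = z) := by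
  refine ⟨fun a b c => ?_, fun a => ?_, fun a => ?_, fun a => ?_, fun a => ?_⟩
  · simp only [hmul, T4, T2a]
  · simp [hmul, T1]
  · simp [hmul, T2b]
  · simp [hmul, T3]
  · simp [hmul, T2a]
end

section
/- In a ternary structure (A,p,0,1) satisfying (T1)–(T4), defining a∘b = p(a,b,1), the structure (A,∘,0) is a monoid, and a∘1 = 1 = 1∘a for all a. -/
theorem stmt_4 {A : Type*} (p : A → A → A → A) (z o : A)
    (T1 : ∀ a, p z a o = a)
    (T2a : ∀ a b, p a z b = a)
    (T2b : ∀ a b, p b o a = a)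
    (T3 : ∀ a b, p a b a = a)
    (T4 : ∀ a b₁ b₂ b₃ c, p a (p b₁ b₂ b₃) c = p (p a b₁ c) b₂ (p a b₃ c))
    (circ : A → A → A) (hcirc : ∀ a b, circ a b = p a b o) :
    (∀ a b c : A, circ (circ a b) c = circ a (circ b c)) ∧
    (∀ a : A, circ a z = a) ∧ (∀ a : A, circ z a = a) ∧
    (∀ a : A, circ a o = o) ∧ (∀ a : A, circ o a = o) := by
  refine ⟨fun a b c => ?_, fun a => by rw [hcirc, T2a], fun a => by rw [hcirc, T1],
    fun a => by rw [hcirc, T2b], fun a => by rw [hcirc, T3]⟩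
  rw [hcirc, hcirc, hcirc, hcirc, T4, T2b]
end

section
/- In a ternary structure (A,p,0,1) satisfying (T1)–(T4), defining ā = p(1,a,0), a·b = p(0,a,b), and a∘b = p(a,b,1), the de Morgan laws hold: for all a,b, the complement of a·b equals b̄∘ā, and the complement of a∘b equals b̄·ā. -/
theorem stmt_5 {A : Type*} (p : A → A → A → A) (z o : A)
    (T1 : ∀ a, p z a o = a)
    (T2a : ∀ a b, p a z b = a)
    (T2b : ∀ a b, p b o a = a)
    (T3 : ∀ a b, p a b a = a)
    (T4 : ∀ a b₁ b₂ b₃ c, p a (p b₁ b₂ b₃) c = p (p a b₁ c) b₂ (p a b₃ c))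
    (bar : A → A) (hbar : ∀ a, bar a = p o a z)
    (mul : A → A → A) (hmul : ∀ a b, mul a b = p z a b)
    (circ : A → A → A) (hcirc : ∀ a b, circ a b = p a b o) :
    ∀ a b : A, bar (mul a b) = circ (bar b) (bar a) ∧
      bar (circ a b) = mul (bar b) (bar a) := by
  intro a b
  simp only [hbar, hmul, hcirc]
  constructor
  · rw [T4, T2a, T4, T2b, T2a]
  · rw [T4, T2b, T4, T2b, T2a]
end

section
/- In a ternary structure (A,p,0,1) satisfying (T1)–(T4), defining ā = p(1,a,0) and a+b = p(a,b,ā), the structure (A,+,0) is a monoid, and a+1 = ā = 1+a for all a; in particular 1+1 = 0. -/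
theorem stmt_6 {A : Type*} (p : A → A → A → A) (z o : A)
    (T1 : ∀ a, p z a o = a)
    (T2a : ∀ a b, p a z b = a)
    (T2b : ∀ a b, p b o a = a)
    (T3 : ∀ a b, p a b a = a)
    (T4 : ∀ a b₁ b₂ b₃ c, p a (p b₁ b₂ b₃) c = p (p a b₁ c) b₂ (p a b₃ c))
    (bar : A → A) (hbar : ∀ a, bar a = p o a z)
    (add : A → A → A) (hadd : ∀ a b, add a b = p a b (bar a)) :
    (∀ a b c : A, add (add a b) c = add a (add b c)) ∧
    (∀ a : A, add a z = a) ∧ (∀ a : A, add z a = a) ∧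
    (∀ a : A, add a o = bar a) ∧ (∀ a : A, add o a = bar a) ∧
    add o o = z := by
  have hbz : bar z = o := by rw [hbar, T2a]
  have hbo : bar o = z := by rw [hbar, T2b]
  have hbarp : ∀ b₁ b₂ b₃, bar (p b₁ b₂ b₃) = p (bar b₁) b₂ (bar b₃) := by
    intro b₁ b₂ b₃; rw [hbar, T4, ← hbar, ← hbar]
  have hbb : ∀ a, bar (bar a) = a := by
    intro a; rw [hbar a, hbarp, hbz, hbo, T1]
  have key : ∀ a b, p (bar a) b a = p a (bar b) (bar a) := by
    intro a b
    rw [hbar b, T4, T2b, T2a]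
  refine ⟨?_, ?_, ?_, ?_, ?_, ?_⟩
  · intro a b c
    simp only [hadd]
    rw [T4, hbarp, hbb, key]
  · intro a; rw [hadd, T2a]
  · intro a; rw [hadd, hbz, T1]
  · intro a; rw [hadd, T2b]
  · intro a; rw [hadd, hbo, ← hbar]
  · rw [hadd, hbo, T2b]
end

section
/- In a ternary structure (A,p,0,1) satisfying (T1)–(T4), if the operation a∘b = p(a,b,1) is idempotent (a∘a = a for all a), then the absorption laws hold: a∘(b·a) = a and (a∘b)·a = a for all a,b, where a·b = p(0,a,b). -/
theorem stmt_7 {A : Type*} (p : A → A → A → A) (z o : A)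
    (T1 : ∀ a, p z a o = a)
    (T2a : ∀ a b, p a z b = a)
    (T2b : ∀ a b, p b o a = a)
    (T3 : ∀ a b, p a b a = a)
    (T4 : ∀ a b₁ b₂ b₃ c, p a (p b₁ b₂ b₃) c = p (p a b₁ c) b₂ (p a b₃ c))
    (mul : A → A → A) (hmul : ∀ a b, mul a b = p z a b)
    (circ : A → A → A) (hcirc : ∀ a b, circ a b = p a b o)
    (idem : ∀ a, circ a a = a) :
    ∀ a b : A, circ a (mul b a) = a ∧ mul (circ a b) a = a := by
  have idem' : ∀ a, p a a o = a := by
    intro a; rw [← hcirc]; exact idem a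
  -- key lemma: mul is idempotent, i.e. p z a a = a
  have mulidem : ∀ a, p z a a = a := by
    intro a
    set q := p o a z with hq
    -- B3 : p o a q = q
    have B3 : p o a q = q := by
      conv_rhs => rw [← idem' q]
      conv_rhs => rw [hq]
      rw [T4, T2b, T2a, ← hq]
    -- U2 : p o (p z a a) z = q
    have U2 : p o (p z a a) z = q := by
      rw [T4, T2a, ← hq, B3]
    calc p z a a = p z (p z a a) o := (T1 _).symm
      _ = p (p o o z) (p z a a) (p o z z) := by rw [T2b, T2a]
      _ = p o (p o (p z a a) z) z := (T4 o o (p z a a) z z).symm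
      _ = p o (p o a z) z := by rw [U2, hq]
      _ = p (p o o z) a (p o z z) := T4 _ _ _ _ _
      _ = p z a o := by rw [T2b, T2a]
      _ = a := T1 a
  intro a b
  constructor
  · rw [hcirc, hmul, T4, T2a, idem' a, T3]
  · rw [hmul, hcirc, T4, mulidem, T2b, T3]
end

section
/- In a ternary structure (A,p,0,1) satisfying (T1)–(T4), if a·b = p(0,a,b) and a∘b = p(a,b,1) are both commutative and idempotent, then they distribute over each other: (b∘c)·a = (b·a)∘(c·a) and (b·c)∘a = (b∘a)·(c∘a) for all a,b,c. -/
theorem key_8 {A : Type*} (p : A → A → A → A) (z o : A)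
    (T1 : ∀ a, p z a o = a)
    (T2a : ∀ a b, p a z b = a)
    (T2b : ∀ a b, p b o a = a)
    (T3 : ∀ a b, p a b a = a)
    (T4 : ∀ a b₁ b₂ b₃ c, p a (p b₁ b₂ b₃) c = p (p a b₁ c) b₂ (p a b₃ c))
    (mul : A → A → A) (hmul : ∀ a b, mul a b = p z a b)
    (circ : A → A → A) (hcirc : ∀ a b, circ a b = p a b o)
    (mul_comm : ∀ a b, mul a b = mul b a)
    (circ_comm : ∀ a b, circ a b = circ b a)
    (mul_idem : ∀ a, mul a a = a)
    (circ_idem : ∀ a, circ a a = a) :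
    ∀ a b c : A, mul (circ b c) a = circ (mul b a) (mul c a) := by
  intro a b c
  have habs : p (p z b a) a o = a := by
    rw [← hcirc (p z b a) a, circ_comm, hcirc, T4, T2a,
      show p a a o = a from by rw [← hcirc]; exact circ_idem a, T3]
  simp only [hmul, hcirc]
  rw [T4, T4, T2a, T2b, habs]

theorem stmt_8 {A : Type*} (p : A → A → A → A) (z o : A)
    (T1 : ∀ a, p z a o = a)
    (T2a : ∀ a b, p a z b = a)
    (T2b : ∀ a b, p b o a = a)
    (T3 : ∀ a b, p a b a = a)
    (T4 : ∀ a b₁ b₂ b₃ c, p a (p b₁ b₂ b₃) c = p (p a b₁ c) b₂ (p a b₃ c))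
    (mul : A → A → A) (hmul : ∀ a b, mul a b = p z a b)
    (circ : A → A → A) (hcirc : ∀ a b, circ a b = p a b o)
    (mul_comm : ∀ a b, mul a b = mul b a)
    (circ_comm : ∀ a b, circ a b = circ b a)
    (mul_idem : ∀ a, mul a a = a)
    (circ_idem : ∀ a, circ a a = a) :
    ∀ a b c : A, mul (circ b c) a = circ (mul b a) (mul c a) ∧
      circ (mul b c) a = mul (circ b a) (circ c a) := by
  intro a b c
  refine ⟨key_8 p z o T1 T2a T2b T3 T4 mul hmul circ hcirc mul_comm circ_comm
      mul_idem circ_idem a b c, ?_⟩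
  exact key_8 (fun x y w => p w y x) o z T1
    (fun a b => T2b a b) (fun a b => T2a a b) T3
    (fun a b₁ b₂ b₃ c => T4 c b₃ b₂ b₁ a)
    circ (fun a b => by rw [circ_comm, hcirc])
    mul (fun a b => by rw [mul_comm, hmul])
    circ_comm mul_comm circ_idem mul_idem a b c
end

section
/- In a ternary structure (A,p,0,1) satisfying (T1)–(T4), defining ā = p(1,a,0), a·b = p(0,a,b), and a+b = p(a,b,ā): if a+a = 0 for all a, then + is commutative and · is right-distributive over +, i.e. (a+b)·c = (a·c)+(b·c). -/
theorem stmt_9 {A : Type*} (p : A → A → A → A) (z o : A)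
    (T1 : ∀ a, p z a o = a)
    (T2a : ∀ a b, p a z b = a)
    (T2b : ∀ a b, p b o a = a)
    (T3 : ∀ a b, p a b a = a)
    (T4 : ∀ a b₁ b₂ b₃ c, p a (p b₁ b₂ b₃) c = p (p a b₁ c) b₂ (p a b₃ c))
    (bar : A → A) (hbar : ∀ a, bar a = p o a z)
    (mul : A → A → A) (hmul : ∀ a b, mul a b = p z a b)
    (add : A → A → A) (hadd : ∀ a b, add a b = p a b (bar a))
    (hchar : ∀ a, add a a = z) :
    (∀ a b : A, add a b = add b a) ∧
    (∀ a b c : A, mul (add a b) c = add (mul a c) (mul b c)) := by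
  -- bar distributes over p
  have B : ∀ x m y, bar (p x m y) = p (bar x) m (bar y) := by
    intro x m y; simp only [hbar, T4]
  -- swap lemma
  have S : ∀ x m y, p x (bar m) y = p y m x := by
    intro x m y; simp only [hbar, T4, T2a, T2b]
  have barbar : ∀ a, bar (bar a) = a := by
    intro a; simp only [hbar, T4, T2a, T2b, T1]
  have barz : bar z = o := by simp only [hbar, T2a]
  have hchar' : ∀ a, p a a (bar a) = z := by
    intro a; rw [← hadd]; exact hchar a
  have E2 : ∀ a, p (bar a) a a = o := by
    intro a
    have h := congrArg bar (hchar' a)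
    rwa [B, barbar, barz] at h
  have C : ∀ x m y, p (p x m y) m (p y m x) = x := by
    intro x m y
    rw [← S x m y, ← T4, hchar', T2a]
  have L : ∀ a b, add a (add a b) = b := by
    intro a b
    rw [hadd, hadd, T4, hchar', S, E2, T1]
  have R : ∀ a b, add (add a b) b = a := by
    intro a b
    rw [hadd a b, hadd, B, barbar]
    exact C a b (bar a)
  have comm : ∀ a b, add a b = add b a := by
    intro a b
    have h2 : add (add a b) b = a := R a b
    have h3 : add (add a b) a = b := by
      have h := L (add a b) b
      rwa [h2] at h
    have h4 := R (add a b) a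
    rw [h3] at h4
    exact h4.symm
  refine ⟨comm, ?_⟩
  have mulbar : ∀ a c, p z (bar a) c = p c a z := by
    intro a c; rw [hbar, T4, T2b, T2a]
  have key : ∀ a c, add c (mul a c) = p c a z := by
    intro a c
    rw [hadd, hmul, T4, T2a, hchar']
  intro a b c
  have hL : mul (add a b) c = p (mul a c) b (p c a z) := by
    rw [hmul, hadd, T4, mulbar, ← hmul]
  have hR : add (mul a c) (mul b c) = p (mul a c) b (p c a z) := by
    rw [hadd, hmul b c, T4, T2a, ← hadd, comm (mul a c) c, key a c]
  rw [hL, hR]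
end

section
/- In a ternary structure (A,p,0,1) satisfying (T1)–(T4), if every element a satisfies p(0,p(1,a,0),a) = 0 and p(p(1,a,0),a,1) = 1 (Boolean complements), then the derived operations are idempotent: p(0,a,a) = a and p(a,a,1) = a for all a. -/
theorem stmt_10 {A : Type*} (p : A → A → A → A) (z o : A)
    (T1 : ∀ a, p z a o = a)
    (T2a : ∀ a b, p a z b = a)
    (T2b : ∀ a b, p b o a = a)
    (T3 : ∀ a b, p a b a = a)
    (T4 : ∀ a b₁ b₂ b₃ c, p a (p b₁ b₂ b₃) c = p (p a b₁ c) b₂ (p a b₃ c))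
    (hc1 : ∀ a, p z (p o a z) a = z)
    (hc2 : ∀ a, p (p o a z) a o = o) :
    ∀ a : A, p z a a = a ∧ p a a o = a := by
  intro a
  have hinv : p o (p o a z) z = a := by
    rw [T4, T2b, T2a, T1]
  have hzaa' : p z a (p o a z) = z := by
    have h := hc1 (p o a z); rwa [hinv] at h
  have haa'o : p a (p o a z) o = o := by
    have h := hc2 (p o a z); rwa [hinv] at h
  constructor
  · have h := T4 z (p o a z) a o a
    rw [hc2 a, hc1 a, T2b] at h
    exact h.symm
  · have h := T4 a z a (p o a z) o
    rw [hzaa', haa'o, T2a] at h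
    exact h.symm
end

section
/- In a ternary structure (A,p,0,1) satisfying (T1)–(T4), if the operation a·b = p(0,a,b) is commutative and idempotent, then with a∘b = p(a,b,1) and ā = p(1,a,0), the structure (A,∘,·,complement,0,1) is a de Morgan algebra: (A,·,∘,0,1) is a bounded distributive lattice and complement is an involution satisfying the de Morgan law. -/
theorem stmt_14 {A : Type*} (p : A → A → A → A) (z o : A)
    (T1 : ∀ a, p z a o = a)
    (T2a : ∀ a b, p a z b = a)
    (T2b : ∀ a b, p b o a = a)
    (T3 : ∀ a b, p a b a = a)
    (T4 : ∀ a b₁ b₂ b₃ c, p a (p b₁ b₂ b₃) c = p (p a b₁ c) b₂ (p a b₃ c))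
    (bar : A → A) (hbar : ∀ a, bar a = p o a z)
    (mul : A → A → A) (hmul : ∀ a b, mul a b = p z a b)
    (circ : A → A → A) (hcirc : ∀ a b, circ a b = p a b o)
    (mul_comm : ∀ a b, mul a b = mul b a)
    (mul_idem : ∀ a, mul a a = a) :
    (∀ a b : A, mul a b = mul b a) ∧
    (∀ a b : A, circ a b = circ b a) ∧
    (∀ a b c : A, mul (mul a b) c = mul a (mul b c)) ∧
    (∀ a b c : A, circ (circ a b) c = circ a (circ b c)) ∧
    (∀ a b : A, circ a (mul a b) = a) ∧
    (∀ a b : A, mul a (circ a b) = a) ∧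
    (∀ a b c : A, mul a (circ b c) = circ (mul a b) (mul a c)) ∧
    (∀ a b c : A, circ a (mul b c) = mul (circ a b) (circ a c)) ∧
    (∀ a : A, mul a o = a) ∧ (∀ a : A, circ a z = a) ∧
    (∀ a : A, mul a z = z) ∧ (∀ a : A, circ a o = o) ∧
    (∀ a : A, bar (bar a) = a) ∧
    (∀ a b : A, bar (mul a b) = circ (bar b) (bar a)) := by
  -- p x o y = y
  have P1 : ∀ x y : A, p x o y = y := fun x y => T2b y x
  -- p z a a = a
  have muli : ∀ a : A, p z a a = a := by
    intro a; rw [← hmul]; exact mul_idem a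
  -- flipping lemma: bar in the middle swaps the outer arguments
  have H3 : ∀ x y d : A, p x (p o y z) d = p d y x := by
    intro x y d; rw [T4, P1, T2a]
  -- middle = mul
  have H1 : ∀ x b c d : A, p x (p z b c) d = p x b (p x c d) := by
    intro x b c d; rw [T4, T2a]
  -- involution
  have hbarbar : ∀ a : A, bar (bar a) = a := by
    intro a; rw [hbar, hbar, T4, P1, T2a, T1]
  -- raw de Morgan
  have dmraw : ∀ a b : A, bar (mul a b) = p o a (bar b) := by
    intro a b; rw [hmul, hbar, hbar, T4, T2a]
  -- de Morgan
  have dm : ∀ a b : A, bar (mul a b) = circ (bar b) (bar a) := by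
    intro a b
    rw [dmraw, hcirc, hbar b, hbar a, H3]
  -- key : bar (mul (bar a) (bar b)) = circ b a
  have key : ∀ a b : A, bar (mul (bar a) (bar b)) = circ b a := by
    intro a b
    rw [dmraw, hbarbar, hbar, H3, hcirc]
  have circ_comm : ∀ a b : A, circ a b = circ b a := by
    intro a b
    rw [← key b a, ← key a b, mul_comm]
  -- de Morgan for circ
  have dmc : ∀ a b : A, bar (circ a b) = mul (bar b) (bar a) := by
    intro a b
    have h := dm (bar b) (bar a)
    rw [hbarbar, hbarbar] at h
    rw [← h, hbarbar]
  have binj : ∀ x y : A, bar x = bar y → x = y := by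
    intro x y h
    rw [← hbarbar x, h, hbarbar]
  have mul_assoc : ∀ a b c : A, mul (mul a b) c = mul a (mul b c) := by
    intro a b c
    simp only [hmul]
    rw [T4, T2a]
  have circ_assoc : ∀ a b c : A, circ (circ a b) c = circ a (circ b c) := by
    intro a b c
    simp only [hcirc]
    rw [T4, P1]
  have mul_absorb : ∀ a b : A, mul a (circ a b) = a := by
    intro a b
    rw [mul_comm, hmul, hcirc, T4, muli, P1, T3]
  have circ_absorb : ∀ a b : A, circ a (mul a b) = a := by
    intro a b
    have h1 : mul (bar a) (bar (mul a b)) = bar a := by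
      rw [dm, circ_comm]
      exact mul_absorb _ _
    rw [← hbarbar (circ a (mul a b)), dmc, mul_comm, h1, hbarbar]
  -- mul absorption in p-form
  have ma' : ∀ a c : A, p z a (p a c o) = a := by
    intro a c
    have h := mul_absorb a c
    rwa [hmul, hcirc] at h
  have distrib1 : ∀ a b c : A, circ a (mul b c) = mul (circ a b) (circ a c) := by
    intro a b c
    simp only [hcirc, hmul]
    rw [H1, T4, P1, ma']
  have distrib2 : ∀ a b c : A, mul a (circ b c) = circ (mul a b) (mul a c) := by
    intro a b c
    apply binj
    rw [dm, dmc, dmc, dm, dm,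
        circ_comm (mul (bar c) (bar b)) (bar a), distrib1,
        circ_comm (bar a) (bar c), circ_comm (bar a) (bar b)]
  refine ⟨mul_comm, circ_comm, mul_assoc, circ_assoc, circ_absorb, mul_absorb,
    distrib2, distrib1, ?_, ?_, ?_, ?_, hbarbar, dm⟩
  · intro a; rw [hmul, T1]
  · intro a; rw [hcirc, T2a]
  · intro a; rw [hmul, T3]
  · intro a; rw [hcirc, P1]
end

section
/- In a ternary structure (A,p,0,1) satisfying (T1)–(T4), with ā = p(1,a,0), a·b = p(0,a,b), a∘b = p(a,b,1): if p(a,b,c) = (b̄·a)∘(a·c)∘(b·c) for all a,b,c, then the operations · and ∘ are both commutative and idempotent. -/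
theorem stmt_15 {A : Type*} (p : A → A → A → A) (z o : A)
    (T1 : ∀ a, p z a o = a)
    (T2a : ∀ a b, p a z b = a)
    (T2b : ∀ a b, p b o a = a)
    (T3 : ∀ a b, p a b a = a)
    (T4 : ∀ a b₁ b₂ b₃ c, p a (p b₁ b₂ b₃) c = p (p a b₁ c) b₂ (p a b₃ c))
    (bar : A → A) (hbar : ∀ a, bar a = p o a z)
    (mul : A → A → A) (hmul : ∀ a b, mul a b = p z a b)
    (circ : A → A → A) (hcirc : ∀ a b, circ a b = p a b o)
    (hp : ∀ a b c, p a b c = circ (mul (bar b) a) (circ (mul a c) (mul b c))) :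
    (∀ a b : A, mul a b = mul b a) ∧ (∀ a : A, mul a a = a) ∧
    (∀ a b : A, circ a b = circ b a) ∧ (∀ a : A, circ a a = a) := by
  have barz : bar z = o := by rw [hbar, T2a]
  have I8 : ∀ a b c, p a (bar b) c = p c b a := by
    intro a b c
    have h := T4 a o b z c
    rw [T2b, T2a] at h
    rw [hbar]
    exact h
  have barinv : ∀ b, bar (bar b) = b := by
    intro b
    rw [hbar (bar b), I8, T1]
  have I8' : ∀ a b c, p a b c = p c (bar b) a := by
    intro a b c
    have h := I8 a (bar b) c
    rw [barinv] at h
    exact h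
  have mulo : ∀ a, mul a o = a := fun a => by rw [hmul, T1]
  have muloa : ∀ a, mul o a = a := fun a => by rw [hmul, T2b]
  have mulza : ∀ a, mul z a = z := fun a => by rw [hmul, T2a]
  have circz : ∀ a, circ a z = a := fun a => by rw [hcirc, T2a]
  have D1 : ∀ a b, bar (mul a b) = circ (bar b) (bar a) := by
    intro a b
    rw [hcirc, I8 (bar b) a o, hbar (mul a b), hmul, T4, T2a, hbar b]
  have D2 : ∀ a b, bar (circ a b) = mul (bar b) (bar a) := by
    intro a b
    rw [hmul, ← I8' (bar a) b z, hbar (circ a b), hcirc, T4, T2b, hbar a]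
  have I1 : ∀ a b, circ a (mul a b) = a := by
    intro a b
    have h := hp a z b
    rw [T2a, barz, muloa, mulza, circz] at h
    exact h.symm
  have circidem : ∀ a, circ a a = a := by
    intro a
    have h := I1 a o
    rwa [mulo] at h
  have mulidem : ∀ a, mul a a = a := by
    intro a
    have h := congrArg bar (D1 a a)
    rwa [barinv, circidem, barinv] at h
  have L2 : ∀ x y, mul (circ x y) x = x := by
    intro x y
    rw [hmul, hcirc, T4, T2b, ← hmul, mulidem, T3]
  have L3 : ∀ a b, circ a (mul b a) = a := by
    intro a b
    have h := congrArg bar (L2 (bar a) (bar b))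
    rwa [D1, barinv, D2, barinv, barinv] at h
  have I4 : ∀ a b, circ (mul (bar b) a) (circ a b) = circ a b := by
    intro a b
    have h := hp a b o
    rw [mulo, mulo, ← hcirc] at h
    exact h.symm
  have M1 : ∀ a y, circ (mul y a) (circ a (bar y)) = circ (bar y) a := by
    intro a y
    have h := (hp a (bar y) o).symm.trans ((I8 a y o).trans (hp o y a))
    rwa [barinv, mulo, mulo, muloa, L3] at h
  have circcomm : ∀ a w, circ a w = circ w a := by
    intro a w
    have h := M1 a (bar w)
    rw [barinv] at h
    rw [I4] at h
    exact h
  have mulcomm : ∀ a b, mul a b = mul b a := by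
    intro a b
    have h := congrArg bar (D1 a b)
    rwa [barinv, circcomm, ← D1, barinv] at h
  exact ⟨mulcomm, mulidem, circcomm, circidem⟩
end

section
/- Let (A,·,∘,⁻,0,1) be a de Morgan algebra. Define p(a,b,c) = (b̄·a)∘(a·c)∘(b·c). Then (A,p,0,1) satisfies axioms (T1)–(T4): p(0,a,1)=a; p(a,0,b)=a=p(b,1,a); p(a,b,a)=a; and p(a,p(b1,b2,b3),c)=p(p(a,b1,c),b2,p(a,b3,c)). Moreover p(0,a,b)=p(0,b,a) and p(0,a,a)=a. -/
/-!
By distributivity, `p(a, b, c) = (b̄ ⊓ a) ⊔ (a ⊓ c) ⊔ (b ⊓ c)` equals the meet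
`(c ⊔ b̄) ⊓ (c ⊔ a) ⊓ (a ⊔ b)`, so the de Morgan laws turn the complement of `p(a, b, c)` into
`p(ā, b, c̄)`. Consequently the pair formed by `p(b₁, b₂, b₃)` and its complement is
`(Ȳ ⊓ X) ⊔ (X ⊓ Z) ⊔ (Y ⊓ Z)` computed in `A × A`, where `X = (b₁, b̄₁)`, `Z = (b₃, b̄₃)`,
`Y = (b₂, b₂)` and `Ȳ = (b̄₂, b̄₂)`. For fixed `a, c`, the map
`(x, x') ↦ (x' ⊓ a) ⊔ (a ⊓ c) ⊔ (x ⊓ c)` is a lattice homomorphism `A × A → A` sending `(b, b̄)`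
to `p(a, b, c)`, and it sends `(t, t) ⊓ X` to `t ⊓ p(a, b₁, c)` up to the term `a ⊓ c`.
Applying it to the pair yields (T4), the stray copies of `a ⊓ c` being absorbed by
`p(a, b₁, c) ⊓ p(a, b₃, c)`.
-/

section

variable {α : Type*} [DistribLattice α]

theorem inf_sup_inf_sup_inf_eq_sup_inf_sup_inf_sup (x y z w : α) :
    y ⊓ x ⊔ (x ⊓ z ⊔ w ⊓ z) = (z ⊔ y) ⊓ (z ⊔ x) ⊓ (x ⊔ w) := by
  calc y ⊓ x ⊔ (x ⊓ z ⊔ w ⊓ z) = z ⊓ (x ⊔ w) ⊔ y ⊓ x := by rw [inf_sup_left]; ac_rfl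
    _ = (z ⊔ y ⊓ x) ⊓ (x ⊔ w) := by
      rw [inf_sup_right, inf_of_le_left (le_sup_of_le_left inf_le_right : y ⊓ x ≤ x ⊔ w)]
    _ = (z ⊔ y) ⊓ (z ⊔ x) ⊓ (x ⊔ w) := by rw [sup_inf_left]

def dmTernary (n : α → α) (a b c : α) : α := n b ⊓ a ⊔ (a ⊓ c ⊔ b ⊓ c)

theorem dmTernary_eq_inf (n : α → α) (a b c : α) :
    dmTernary n a b c = (c ⊔ n b) ⊓ (c ⊔ a) ⊓ (a ⊔ b) :=
  inf_sup_inf_sup_inf_eq_sup_inf_sup_inf_sup a (n b) c b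

theorem dmTernary_bot_left [OrderBot α] (n : α → α) (a b : α) : dmTernary n ⊥ a b = a ⊓ b := by
  simp only [dmTernary, inf_bot_eq, bot_inf_eq, bot_sup_eq]

theorem dmTernary_self_self (n : α → α) (a b : α) : dmTernary n a b a = a := by
  rw [dmTernary, inf_idem, inf_comm b a, sup_inf_self]
  exact sup_eq_right.2 inf_le_right

def dmTernaryHom (a c : α) : LatticeHom (α × α) α where
  toFun x := x.2 ⊓ a ⊔ (a ⊓ c ⊔ x.1 ⊓ c)
  map_sup' x y := by
    simp only [Prod.fst_sup, Prod.snd_sup, inf_sup_right]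
    ac_nf
  map_inf' x y := by
    change x.2 ⊓ y.2 ⊓ a ⊔ (a ⊓ c ⊔ x.1 ⊓ y.1 ⊓ c) =
      (x.2 ⊓ a ⊔ (a ⊓ c ⊔ x.1 ⊓ c)) ⊓ (y.2 ⊓ a ⊔ (a ⊓ c ⊔ y.1 ⊓ c))
    rw [inf_sup_inf_sup_inf_eq_sup_inf_sup_inf_sup a, inf_sup_inf_sup_inf_eq_sup_inf_sup_inf_sup a,
      inf_sup_inf_sup_inf_eq_sup_inf_sup_inf_sup a, sup_inf_left, sup_inf_left]
    ac_nf

theorem dmTernaryHom_apply (a c : α) (x : α × α) :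
    dmTernaryHom a c x = x.2 ⊓ a ⊔ (a ⊓ c ⊔ x.1 ⊓ c) := rfl

theorem inf_le_dmTernaryHom (a c : α) (x : α × α) : a ⊓ c ≤ dmTernaryHom a c x :=
  le_sup_of_le_right le_sup_left

theorem dmTernaryHom_diag_inf (a c t : α) (x : α × α) :
    dmTernaryHom a c ((t, t) ⊓ x) = t ⊓ dmTernaryHom a c x ⊔ a ⊓ c := by
  calc dmTernaryHom a c ((t, t) ⊓ x) = t ⊓ (x.2 ⊓ a) ⊔ (t ⊓ (x.1 ⊓ c) ⊔ a ⊓ c) := by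
        simp only [dmTernaryHom_apply, Prod.fst_inf, Prod.snd_inf]; ac_rfl
    _ = t ⊓ (x.2 ⊓ a) ⊔ (t ⊓ (x.1 ⊓ c) ⊔ (t ⊓ (a ⊓ c) ⊔ a ⊓ c)) := by
        rw [sup_eq_right.2 (inf_le_right : t ⊓ (a ⊓ c) ≤ a ⊓ c)]
    _ = t ⊓ dmTernaryHom a c x ⊔ a ⊓ c := by
        rw [dmTernaryHom_apply, inf_sup_left, inf_sup_left]; ac_rfl

structure IsDeMorganInvolution (n : α → α) : Prop where
  involutive : Function.Involutive n
  map_inf : ∀ a b, n (a ⊓ b) = n a ⊔ n b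

namespace IsDeMorganInvolution

variable {n : α → α}

theorem map_sup (hn : IsDeMorganInvolution n) (a b : α) : n (a ⊔ b) = n a ⊓ n b := by
  rw [← hn.involutive (n a ⊓ n b), hn.map_inf, hn.involutive, hn.involutive]

theorem map_bot [BoundedOrder α] (hn : IsDeMorganInvolution n) : n ⊥ = ⊤ := by
  simpa only [bot_inf_eq, hn.involutive ⊤, sup_top_eq] using hn.map_inf ⊥ (n ⊤)

theorem map_top [BoundedOrder α] (hn : IsDeMorganInvolution n) : n ⊤ = ⊥ := by
  rw [← hn.map_bot, hn.involutive]

theorem dmTernary_bot_middle [BoundedOrder α] (hn : IsDeMorganInvolution n) (a b : α) :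
    dmTernary n a ⊥ b = a := by
  rw [dmTernary, hn.map_bot, top_inf_eq, bot_inf_eq, sup_bot_eq, sup_inf_self]

theorem dmTernary_top_middle [BoundedOrder α] (hn : IsDeMorganInvolution n) (a b : α) :
    dmTernary n b ⊤ a = a := by
  rw [dmTernary, hn.map_top, bot_inf_eq, bot_sup_eq, top_inf_eq]
  exact sup_eq_right.2 inf_le_right

theorem map_dmTernary (hn : IsDeMorganInvolution n) (a b c : α) :
    n (dmTernary n a b c) = dmTernary n (n a) b (n c) := by
  rw [dmTernary_eq_inf n (n a) b (n c), dmTernary]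
  simp only [hn.map_sup, hn.map_inf, hn.involutive b]
  ac_rfl

theorem dmTernary_pair (hn : IsDeMorganInvolution n) (b₁ b₂ b₃ : α) :
    (dmTernary n b₁ b₂ b₃, n (dmTernary n b₁ b₂ b₃)) =
      (n b₂, n b₂) ⊓ (b₁, n b₁) ⊔ ((b₁, n b₁) ⊓ (b₃, n b₃) ⊔ (b₂, b₂) ⊓ (b₃, n b₃)) :=
  Prod.ext rfl (hn.map_dmTernary b₁ b₂ b₃)

theorem dmTernary_dmTernary (hn : IsDeMorganInvolution n) (a b₁ b₂ b₃ c : α) :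
    dmTernary n a (dmTernary n b₁ b₂ b₃) c =
      dmTernary n (dmTernary n a b₁ c) b₂ (dmTernary n a b₃ c) := by
  have h₁ := dmTernaryHom_diag_inf a c (n b₂) (b₁, n b₁)
  have h₃ := dmTernaryHom_diag_inf a c b₂ (b₃, n b₃)
  set G := dmTernaryHom a c
  have hm : a ⊓ c ≤ G (b₁, n b₁) ⊓ G (b₃, n b₃) :=
    le_inf (inf_le_dmTernaryHom a c _) (inf_le_dmTernaryHom a c _)
  calc dmTernary n a (dmTernary n b₁ b₂ b₃) c
      = G (dmTernary n b₁ b₂ b₃, n (dmTernary n b₁ b₂ b₃)) := rfl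
    _ = n b₂ ⊓ G (b₁, n b₁) ⊔ a ⊓ c ⊔
          (G (b₁, n b₁) ⊓ G (b₃, n b₃) ⊔ (b₂ ⊓ G (b₃, n b₃) ⊔ a ⊓ c)) := by
      rw [hn.dmTernary_pair, SupHomClass.map_sup, SupHomClass.map_sup, h₁, h₃,
        InfHomClass.map_inf]
    _ = n b₂ ⊓ G (b₁, n b₁) ⊔ (G (b₁, n b₁) ⊓ G (b₃, n b₃) ⊔ a ⊓ c ⊔ b₂ ⊓ G (b₃, n b₃)) := by
      ac_nf
    _ = n b₂ ⊓ G (b₁, n b₁) ⊔ (G (b₁, n b₁) ⊓ G (b₃, n b₃) ⊔ b₂ ⊓ G (b₃, n b₃)) := by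
      rw [sup_eq_left.2 hm]

end IsDeMorganInvolution

end

theorem stmt_16_general {A : Type*} (mul circ : A → A → A) (bar : A → A) (z o : A)
    (mul_comm : ∀ a b, mul a b = mul b a)
    (circ_comm : ∀ a b, circ a b = circ b a)
    (mul_assoc : ∀ a b c, mul (mul a b) c = mul a (mul b c))
    (circ_assoc : ∀ a b c, circ (circ a b) c = circ a (circ b c))
    (absorb1 : ∀ a b, circ a (mul a b) = a)
    (absorb2 : ∀ a b, mul a (circ a b) = a)
    (distrib1 : ∀ a b c, mul a (circ b c) = circ (mul a b) (mul a c))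
    (circ_bot : ∀ a, circ a z = a) (circ_top : ∀ a, circ a o = o)
    (invol : ∀ a, bar (bar a) = a)
    (deMorgan : ∀ a b, bar (mul a b) = circ (bar b) (bar a))
    (p : A → A → A → A)
    (hp : ∀ a b c, p a b c = circ (mul (bar b) a) (circ (mul a c) (mul b c))) :
    (∀ a, p z a o = a) ∧
    (∀ a b, p a z b = a) ∧ (∀ a b, p b o a = a) ∧
    (∀ a b, p a b a = a) ∧
    (∀ a b₁ b₂ b₃ c, p a (p b₁ b₂ b₃) c = p (p a b₁ c) b₂ (p a b₃ c)) ∧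
    (∀ a b, p z a b = p z b a) ∧ (∀ a, p z a a = a) := by
  let : Max A := ⟨circ⟩
  let : Min A := ⟨mul⟩
  -- `Lattice.mk'` orders `A` by `a ≤ b ↔ circ a b = b`.
  let : Lattice A := Lattice.mk' circ_comm circ_assoc mul_comm mul_assoc absorb1 absorb2
  let : DistribLattice A := .ofInfSupLe fun a b c => (distrib1 a b c).le
  let : BoundedOrder A :=
    { top := o, le_top := circ_top
      bot := z, bot_le := fun a => (circ_comm z a).trans (circ_bot a) }
  have hbar : IsDeMorganInvolution bar := ⟨invol, fun a b => (deMorgan a b).trans (circ_comm _ _)⟩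
  obtain rfl : p = dmTernary bar := funext₃ hp
  refine ⟨fun a => ?_, hbar.dmTernary_bot_middle, hbar.dmTernary_top_middle,
    dmTernary_self_self bar, hbar.dmTernary_dmTernary, fun a b => ?_, fun a => ?_⟩
  · exact (dmTernary_bot_left bar a ⊤).trans (inf_top_eq a)
  · exact (dmTernary_bot_left bar a b).trans
      ((inf_comm a b).trans (dmTernary_bot_left bar b a).symm)
  · exact (dmTernary_bot_left bar a a).trans (inf_idem a)

theorem stmt_16 {A : Type*} (mul circ : A → A → A) (bar : A → A) (z o : A)
    (mul_comm : ∀ a b, mul a b = mul b a)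
    (circ_comm : ∀ a b, circ a b = circ b a)
    (mul_assoc : ∀ a b c, mul (mul a b) c = mul a (mul b c))
    (circ_assoc : ∀ a b c, circ (circ a b) c = circ a (circ b c))
    (absorb1 : ∀ a b, circ a (mul a b) = a)
    (absorb2 : ∀ a b, mul a (circ a b) = a)
    (distrib1 : ∀ a b c, mul a (circ b c) = circ (mul a b) (mul a c))
    (distrib2 : ∀ a b c, circ a (mul b c) = mul (circ a b) (circ a c))
    (mul_top : ∀ a, mul a o = a) (circ_bot : ∀ a, circ a z = a)
    (mul_bot : ∀ a, mul a z = z) (circ_top : ∀ a, circ a o = o)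
    (invol : ∀ a, bar (bar a) = a)
    (deMorgan : ∀ a b, bar (mul a b) = circ (bar b) (bar a))
    (p : A → A → A → A)
    (hp : ∀ a b c, p a b c = circ (mul (bar b) a) (circ (mul a c) (mul b c))) :
    (∀ a, p z a o = a) ∧
    (∀ a b, p a z b = a) ∧ (∀ a b, p b o a = a) ∧
    (∀ a b, p a b a = a) ∧
    (∀ a b₁ b₂ b₃ c, p a (p b₁ b₂ b₃) c = p (p a b₁ c) b₂ (p a b₃ c)) ∧
    (∀ a b, p z a b = p z b a) ∧ (∀ a, p z a a = a) :=
  stmt_16_general mul circ bar z o mul_comm circ_comm mul_assoc circ_assoc absorb1 absorb2 distrib1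
    circ_bot circ_top invol deMorgan p hp
end

section
/- Let (A,+,·,0,1) be a unitary Abelian (right) near-ring in which a·0 = 0 for all a. Define p(a,b,c) = a + b·(c − a). Then (A,p,0,1) satisfies (T1)–(T4). -/
theorem stmt_17 {A : Type*} [AddCommGroup A] (mul : A → A → A) (one : A)
    (mul_assoc : ∀ a b c, mul (mul a b) c = mul a (mul b c))
    (one_mul : ∀ a, mul one a = a) (mul_one : ∀ a, mul a one = a)
    (right_distrib : ∀ a b c, mul (a + b) c = mul a c + mul b c)
    (mul_zero : ∀ a, mul a 0 = 0)
    (p : A → A → A → A)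
    (hp : ∀ a b c, p a b c = a + mul b (c - a)) :
    (∀ a, p 0 a one = a) ∧
    (∀ a b, p a 0 b = a) ∧ (∀ a b, p b one a = a) ∧
    (∀ a b, p a b a = a) ∧
    (∀ a b₁ b₂ b₃ c, p a (p b₁ b₂ b₃) c = p (p a b₁ c) b₂ (p a b₃ c)) := by
  have zero_mul : ∀ b : A, mul 0 b = 0 := by
    intro b
    have := right_distrib 0 0 b
    rw [add_zero] at this
    exact left_eq_add.mp this
  have sub_mul : ∀ x y z : A, mul (x - y) z = mul x z - mul y z := by
    intro x y z
    have := right_distrib (x - y) y z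
    rw [sub_add_cancel] at this
    exact eq_sub_of_add_eq this.symm
  refine ⟨?_, ?_, ?_, ?_, ?_⟩
  · intro a; rw [hp, sub_zero, mul_one, zero_add]
  · intro a b; rw [hp, zero_mul, add_zero]
  · intro a b; rw [hp, one_mul]; abel
  · intro a b; rw [hp, sub_self, mul_zero, add_zero]
  · intro a b₁ b₂ b₃ c
    simp only [hp]
    rw [right_distrib, mul_assoc]
    have h1 : a + mul b₃ (c - a) - (a + mul b₁ (c - a))
        = mul b₃ (c - a) - mul b₁ (c - a) := by abel
    rw [h1, ← sub_mul]
    abel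
end

section
/- In a ternary structure (A,p,0,1) satisfying (T1)–(T4), with ā = p(1,a,0), a·b = p(0,a,b), a+b = p(a,b,ā), the following are equivalent: (i) (A,+,·,0,1) is a unitary ring of characteristic 2; (ii) p(a,b,c) = (b̄·a)+(b·c) for all a,b,c; (iii) · is left-distributive over +: a·(b+c) = (a·b)+(a·c) for all a,b,c. -/
theorem stmt_18 {A : Type*} (p : A → A → A → A) (z o : A)
    (T1 : ∀ a, p z a o = a)
    (T2a : ∀ a b, p a z b = a)
    (T2b : ∀ a b, p b o a = a)
    (T3 : ∀ a b, p a b a = a)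
    (T4 : ∀ a b₁ b₂ b₃ c, p a (p b₁ b₂ b₃) c = p (p a b₁ c) b₂ (p a b₃ c))
    (bar : A → A) (hbar : ∀ a, bar a = p o a z)
    (mul : A → A → A) (hmul : ∀ a b, mul a b = p z a b)
    (add : A → A → A) (hadd : ∀ a b, add a b = p a b (bar a)) :
    (((∀ a b c : A, add (add a b) c = add a (add b c)) ∧
      (∀ a b : A, add a b = add b a) ∧
      (∀ a : A, add a z = a) ∧
      (∀ a : A, add a a = z) ∧
      (∀ a b c : A, mul (mul a b) c = mul a (mul b c)) ∧
      (∀ a : A, mul a o = a) ∧ (∀ a : A, mul o a = a) ∧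
      (∀ a b c : A, mul a (add b c) = add (mul a b) (mul a c)) ∧
      (∀ a b c : A, mul (add a b) c = add (mul a c) (mul b c))) ↔
      (∀ a b c : A, p a b c = add (mul (bar b) a) (mul b c))) ∧
    ((∀ a b c : A, p a b c = add (mul (bar b) a) (mul b c)) ↔
      (∀ a b c : A, mul a (add b c) = add (mul a b) (mul a c))) := by
  -- basic reductions
  have hXoY : ∀ x y : A, p x o y = y := fun x y => T2b y x
  have hXzY : ∀ x y : A, p x z y = x := fun x y => T2a x y
  have hbb : ∀ a, bar (bar a) = a := by
    intro a
    rw [hbar, hbar, T4, T2b, T2a, T1]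
  have hbz : bar z = o := by rw [hbar, hXzY]
  have hbo : bar o = z := by rw [hbar, hXoY]
  have hbarHom : ∀ u v w, bar (p u v w) = p (bar u) v (bar w) := by
    intro u v w
    rw [hbar (p u v w), T4, ← hbar, ← hbar]
  have hP1 : ∀ a b c, p a b c = p c (bar b) a := by
    intro a b c
    conv_lhs => rw [← hbb b, hbar (bar b)]
    rw [T4, hXoY, hXzY]
  have hmul_ao : ∀ a, mul a o = a := by intro a; rw [hmul]; exact T1 a
  have hmul_oa : ∀ a, mul o a = a := by intro a; rw [hmul]; exact hXoY z a
  have hmul_za : ∀ a, mul z a = z := by intro a; rw [hmul]; exact hXzY z a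
  have hmul_az : ∀ a, mul a z = z := by intro a; rw [hmul]; exact T3 z a
  have hadd_za : ∀ a, add z a = a := by intro a; rw [hadd, hbz]; exact T1 a
  have hadd_az : ∀ a, add a z = a := by intro a; rw [hadd]; exact hXzY a (bar a)
  have hadd_ao : ∀ a, add a o = bar a := by intro a; rw [hadd]; exact hXoY a (bar a)
  have hadd_oa : ∀ a, add o a = bar a := by intro a; rw [hadd, hbo, ← hbar]
  have hadd_oo : add o o = z := by rw [hadd, hbo, hXoY]
  have hmul_assoc : ∀ a b c, mul (mul a b) c = mul a (mul b c) := by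
    intro a b c
    simp only [hmul]
    rw [T4, hXzY]
  have hadd_hom : ∀ a u v w, add a (p u v w) = p (add a u) v (add a w) := by
    intro a u v w
    rw [hadd, T4, ← hadd, ← hadd]
  have hadd_assoc : ∀ a b c, add (add a b) c = add a (add b c) := by
    intro a b c
    have h1 : add a (bar b) = p (bar a) b a := by
      rw [hadd, hP1, hbb]
    have h2 : bar (add a b) = p (bar a) b a := by
      rw [hadd, hbarHom, hbb]
    conv_rhs => rw [hadd b c]
    rw [hadd_hom, h1, hadd (add a b) c, h2]
  -- conditional helpers (given a+a=0)
  have hcancel : ∀ (_ : ∀ x, add x x = z) (a x : A), add a (add a x) = x := by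
    intro hAA a x
    rw [← hadd_assoc, hAA, hadd_za]
  have hcomm : ∀ (_ : ∀ x, add x x = z) (a b : A), add a b = add b a := by
    intro hAA a b
    have hc := hcancel hAA
    have h1 : add a (add b (add a b)) = z := by rw [← hadd_assoc]; exact hAA _
    have h2 : add b (add a b) = a := by
      have h3 := congrArg (add a) h1
      rwa [hc, hadd_az] at h3
    have h4 := congrArg (add b) h2
    rwa [hc] at h4
  have hstar : ∀ (_ : ∀ x, add x x = z) (a b c : A),
      add a (p a b c) = mul b (add a c) := by
    intro hAA a b c
    rw [hadd, T4, ← hadd, ← hadd, hAA, ← hmul]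
  have hrep : ∀ (_ : ∀ x, add x x = z) (a b c : A),
      p a b c = add a (mul b (add a c)) := by
    intro hAA a b c
    conv_lhs => rw [← hcancel hAA a (p a b c)]
    rw [hstar hAA]
  -- (i) → (ii)
  have h12 : ((∀ a b c : A, add (add a b) c = add a (add b c)) ∧
      (∀ a b : A, add a b = add b a) ∧
      (∀ a : A, add a z = a) ∧
      (∀ a : A, add a a = z) ∧
      (∀ a b c : A, mul (mul a b) c = mul a (mul b c)) ∧
      (∀ a : A, mul a o = a) ∧ (∀ a : A, mul o a = a) ∧
      (∀ a b c : A, mul a (add b c) = add (mul a b) (mul a c)) ∧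
      (∀ a b c : A, mul (add a b) c = add (mul a c) (mul b c))) →
      (∀ a b c : A, p a b c = add (mul (bar b) a) (mul b c)) := by
    rintro ⟨hA, hC, hZ, hAA, hM, hMo, hoM, hDl, hDr⟩ a b c
    rw [hrep hAA a b c, hDl, ← hadd_oa b, hDr, hmul_oa, hadd_assoc]
  -- (ii) → (iii)
  have h23 : (∀ a b c : A, p a b c = add (mul (bar b) a) (mul b c)) →
      (∀ a b c : A, mul a (add b c) = add (mul a b) (mul a c)) := by
    intro hP
    have hK9 : ∀ b, add (bar b) b = o := by
      intro b
      have h := hP o b o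
      rw [T3, hmul_ao, hmul_ao] at h
      exact h.symm
    have hK9' : ∀ a, add a (bar a) = o := by
      intro a
      have h := hK9 (bar a)
      rwa [hbb] at h
    have hAA : ∀ x, add x x = z := by
      intro x
      calc add x x = add x (add (bar x) o) := by rw [hadd_ao, hbb]
        _ = add (add x (bar x)) o := (hadd_assoc _ _ _).symm
        _ = add o o := by rw [hK9']
        _ = z := hadd_oo
    have hc := hcancel hAA
    have hCm := hcomm hAA
    have hK1' : ∀ a b, add a (mul (bar b) a) = mul b a := by
      intro a b
      have k1 : a = add (mul (bar b) a) (mul b a) := by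
        have h := hP a b a
        rwa [T3] at h
      calc add a (mul (bar b) a) = add (mul (bar b) a) a := hCm _ _
        _ = add (mul (bar b) a) (add (mul (bar b) a) (mul b a)) := by rw [← k1]
        _ = mul b a := hc _ _
    intro a b c
    rw [← hstar hAA b a c, hP, ← hadd_assoc, hK1']
  -- (iii) → (i)
  have h31 : (∀ a b c : A, mul a (add b c) = add (mul a b) (mul a c)) →
      ((∀ a b c : A, add (add a b) c = add a (add b c)) ∧
      (∀ a b : A, add a b = add b a) ∧
      (∀ a : A, add a z = a) ∧
      (∀ a : A, add a a = z) ∧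
      (∀ a b c : A, mul (mul a b) c = mul a (mul b c)) ∧
      (∀ a : A, mul a o = a) ∧ (∀ a : A, mul o a = a) ∧
      (∀ a b c : A, mul a (add b c) = add (mul a b) (mul a c)) ∧
      (∀ a b c : A, mul (add a b) c = add (mul a c) (mul b c))) := by
    intro hD
    have hAA : ∀ x, add x x = z := by
      intro x
      have h := hD x o o
      rw [hadd_oo, hmul_az, hmul_ao] at h
      exact h.symm
    have hc := hcancel hAA
    have hCm := hcomm hAA
    have hR := hrep hAA
    have hDr : ∀ a b c, mul (add a b) c = add (mul a c) (mul b c) := by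
      intro a b c
      have hbar_c : mul (bar a) c = add c (mul a c) := by
        rw [hmul, hP1, hbb, hR c a z, hadd_az]
      have hhom : mul (add a b) c = p (mul a c) b (mul (bar a) c) := by
        rw [hadd, hmul, T4, ← hmul, ← hmul]
      have key : add (mul a c) (add c (mul a c)) = c := by
        rw [hCm c (mul a c), hc]
      rw [hhom, hbar_c, hR, key]
    exact ⟨hadd_assoc, hCm, hadd_az, hAA, hmul_assoc, hmul_ao, hmul_oa, hD, hDr⟩
  exact ⟨⟨h12, fun h => h31 (h23 h)⟩, ⟨h23, fun h => h12 (h31 h)⟩⟩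
end

section
/- In a ternary structure (A,p,0,1) satisfying (T1)–(T4), with ā = p(1,a,0), a·b = p(0,a,b), a+b = p(a,b,ā), the following are equivalent: (i) p(a,b,c) = a + (b·(a+c)) for all a,b,c; (ii) a+a = 0 for all a; (iii) (a+b)·c = (a·c)+(b·c) for all a,b,c; and each implies that (A,+,·,0,1) is a unitary right near-ring of characteristic 2 (abelian group under +, associative · with identity 1, right distributivity). -/
theorem stmt_19 {A : Type*} (p : A → A → A → A) (z o : A)
    (T1 : ∀ a, p z a o = a)
    (T2a : ∀ a b, p a z b = a)
    (T2b : ∀ a b, p b o a = a)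
    (T3 : ∀ a b, p a b a = a)
    (T4 : ∀ a b₁ b₂ b₃ c, p a (p b₁ b₂ b₃) c = p (p a b₁ c) b₂ (p a b₃ c))
    (bar : A → A) (hbar : ∀ a, bar a = p o a z)
    (mul : A → A → A) (hmul : ∀ a b, mul a b = p z a b)
    (add : A → A → A) (hadd : ∀ a b, add a b = p a b (bar a)) :
    (((∀ a b c : A, p a b c = add a (mul b (add a c))) ↔
      (∀ a : A, add a a = z)) ∧
     ((∀ a : A, add a a = z) ↔
      (∀ a b c : A, mul (add a b) c = add (mul a c) (mul b c)))) ∧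
    ((∀ a : A, add a a = z) →
      ((∀ a b c : A, add (add a b) c = add a (add b c)) ∧
       (∀ a b : A, add a b = add b a) ∧
       (∀ a : A, add a z = a) ∧
       (∀ a : A, add a a = z) ∧
       (∀ a b c : A, mul (mul a b) c = mul a (mul b c)) ∧
       (∀ a : A, mul a o = a) ∧ (∀ a : A, mul o a = a) ∧
       (∀ a b c : A, mul (add a b) c = add (mul a c) (mul b c)))) := by
  -- basic facts about bar
  have hb0 : bar z = o := by rw [hbar, T2a]
  have hb1 : bar o = z := by rw [hbar]; exact T2b z o
  have hbb : ∀ a, bar (bar a) = a := by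
    intro a
    rw [hbar, hbar, T4, T2b z o, T2a o z, T1]
  have hLbar : ∀ a b c, p a (bar b) c = p c b a := by
    intro a b c
    rw [hbar, T4, T2b, T2a]
  have hbarp : ∀ x b y, bar (p x b y) = p (bar x) b (bar y) := by
    intro x b y
    simp only [hbar]
    rw [T4]
  -- basic facts about add and mul
  have add0 : ∀ a, add a z = a := fun a => by rw [hadd, T2a]
  have zadd : ∀ b, add z b = b := fun b => by rw [hadd, hb0, T1]
  have mul1 : ∀ a, mul a o = a := fun a => by rw [hmul, T1]
  have onemul : ∀ a, mul o a = a := fun a => by rw [hmul, T2b]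
  have zmul : ∀ a, mul z a = z := fun a => by rw [hmul, T2a]
  have mulassoc : ∀ a b c, mul (mul a b) c = mul a (mul b c) := by
    intro a b c
    simp only [hmul]
    rw [T4, T2a]
  have baradd : ∀ a b, bar (add a b) = p (bar a) b a := by
    intro a b
    rw [hadd, hbarp, hbb]
  -- associativity of addition (holds unconditionally)
  have addassoc : ∀ a b c, add (add a b) c = add a (add b c) := by
    intro a b c
    rw [hadd (add a b) c, baradd,
        show p (bar a) b a = p a (bar b) (bar a) from (hLbar a b (bar a)).symm,
        hadd a b, ← T4, ← hadd b c, ← hadd a (add b c)]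
  -- lemmas depending on char-2 hypothesis
  have cancel : (∀ a : A, add a a = z) → ∀ a c, add a (add a c) = c := by
    intro H a c
    rw [← addassoc, H, zadd]
  have comm : (∀ a : A, add a a = z) → ∀ a b, add a b = add b a := by
    intro H a b
    have h1 : add (add a b) (add b a) = z := by
      rw [addassoc, ← addassoc b b a, H, zadd, H]
    have h2 := cancel H (add a b) (add b a)
    rw [h1, add0] at h2
    exact h2
  -- pieces for right distributivity
  have e1 : ∀ a b c, mul (add a b) c = p (mul a c) b (p c a z) := by
    intro a b c
    rw [hmul (add a b) c, hadd, T4, hLbar, ← hmul]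
  have e2 : ∀ a b c, add (mul a c) (mul b c) = p (mul a c) b (add (mul a c) c) := by
    intro a b c
    rw [hadd (mul a c) (mul b c), hmul b c, T4, T2a, ← hadd]
  have e3 : (∀ a : A, add a a = z) → ∀ a c, add c (mul a c) = p c a z := by
    intro H a c
    rw [hadd c (mul a c), hmul, T4, T2a, ← hadd, H]
  have distrib : (∀ a : A, add a a = z) →
      ∀ a b c, mul (add a b) c = add (mul a c) (mul b c) := by
    intro H a b c
    rw [e1, e2, comm H (mul a c) c, e3 H]
  -- (ii) → (i)
  have ii_i : (∀ a : A, add a a = z) →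
      ∀ a b c, p a b c = add a (mul b (add a c)) := by
    intro H a b c
    rw [hadd a (mul b (add a c)), hmul, T4, T2a, ← hadd a (add a c), cancel H]
  -- (i) → (ii)
  have i_ii : (∀ a b c : A, p a b c = add a (mul b (add a c))) →
      ∀ a : A, add a a = z := by
    intro h a
    have h2 := h a o z
    rw [T2b, onemul, add0] at h2
    exact h2.symm
  -- (iii) → (ii)
  have iii_ii : (∀ a b c : A, mul (add a b) c = add (mul a c) (mul b c)) →
      ∀ a : A, add a a = z := by
    intro h c
    have oo : add o o = z := by rw [hadd, hb1]; exact T2b z o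
    have h2 := h o o c
    rw [oo, zmul, onemul] at h2
    exact h2.symm
  exact ⟨⟨⟨i_ii, ii_i⟩, ⟨fun H => distrib H, iii_ii⟩⟩,
    fun H => ⟨addassoc, comm H, add0, H, mulassoc, mul1, onemul, distrib H⟩⟩
end
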